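/- If (X, τ) is a Hausdorff locally compact topological space, then X equipped with the topology *O(X) of *-open sets is locally compact. -/

import Mathlib

open Set TopologicalSpace

def RegOpen (X : Type*) [TopologicalSpace X] (U : Set X) : Prop :=
  interior (closure U) = U

def starInt (X : Type*) [TopologicalSpace X] (A : Set X) : Set X :=
  {x | x ∈ A ∧ ∃ W, RegOpen X W ∧ x ∈ W ∧ W ⊆ A}

def starCl (X : Type*) [TopologicalSpace X] (A : Set X) : Set X :=
  {x | ∀ W, RegOpen X W → x ∈ W → (W ∩ A).Nonempty}

def StarOpen (X : Type*) [TopologicalSpace X] (A : Set X) : Prop :=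
  ∀ x ∈ A, ∃ W, RegOpen X W ∧ x ∈ W ∧ W ⊆ A

def starTop (X : Type*) [TopologicalSpace X] : TopologicalSpace X :=
  TopologicalSpace.generateFrom {A | StarOpen X A}

def StarContinuous {X Y : Type*} [TopologicalSpace X] [TopologicalSpace Y] (f : X → Y) : Prop :=
  ∀ A : Set Y, StarOpen Y A → StarOpen X (f ⁻¹' A)

/-! A locally compact Hausdorff space is regular, and in a regular space the regular open sets
form a base: every neighbourhood of a point contains a closed neighbourhood `C`, and then
`int (cl (int C))` is a regular open neighbourhood inside it. So the `*`-open sets are exactly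
the open sets, and `*O(X)` is the original topology. -/

lemma regOpen_interior_closure {X : Type*} [TopologicalSpace X] {U : Set X} (hU : IsOpen U) :
    RegOpen X (interior (closure U)) :=
  (interior_mono <| closure_minimal interior_subset isClosed_closure).antisymm
    (interior_mono <| closure_mono <| hU.subset_interior_iff.mpr subset_closure)

lemma StarOpen.isOpen {X : Type*} [TopologicalSpace X] {A : Set X} (hA : StarOpen X A) :
    IsOpen A :=
  isOpen_iff_forall_mem_open.mpr fun x hx ↦
    let ⟨W, hW, hxW, hWA⟩ := hA x hx
    ⟨W, hWA, hW ▸ isOpen_interior, hxW⟩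

lemma starOpen_of_isOpen {X : Type*} [TopologicalSpace X] [RegularSpace X] {A : Set X}
    (hA : IsOpen A) : StarOpen X A := by
  intro x hx
  obtain ⟨C, hCx, hC, hCA⟩ := exists_mem_nhds_isClosed_subset (hA.mem_nhds hx)
  refine ⟨interior (closure (interior C)), regOpen_interior_closure isOpen_interior, ?_, ?_⟩
  · exact isOpen_interior.subset_interior_iff.mpr subset_closure
      (mem_interior_iff_mem_nhds.mpr hCx)
  · calc interior (closure (interior C)) ⊆ closure (interior C) := interior_subset
      _ ⊆ C := closure_minimal interior_subset hC
      _ ⊆ A := hCA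

lemma starOpen_iff_isOpen {X : Type*} [TopologicalSpace X] [RegularSpace X] {A : Set X} :
    StarOpen X A ↔ IsOpen A :=
  ⟨StarOpen.isOpen, starOpen_of_isOpen⟩

lemma starTop_eq_self {X : Type*} [t : TopologicalSpace X] [RegularSpace X] :
    starTop X = t := by
  simp only [starTop, starOpen_iff_isOpen, generateFrom_setOfPred_isOpen]

theorem stmt15 {X : Type*} [TopologicalSpace X] [T2Space X] (h : LocallyCompactSpace X) :
    @LocallyCompactSpace X (starTop X) := by
  rwa [starTop_eq_self]
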